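/- arXiv:1403.2674 — 2 statements merged into one kernel-verified Lean document; each statement's English description precedes it below -/
import Mathlib

section
/- In a maximally bilocal-tomographic theory, the four-partite dimension satisfies D_{ABCD} = D_{AB}·D_{CD} + D_A·D_{BD}·D_C + D_{AD}·D_B·D_C + D_A·D_{BC}·D_D + D_{AC}·D_B·D_D − 4·D_A·D_B·D_C·D_D. -/
theorem tripartite_eq_of_bilocal_tomographic {R : Type*} [CommRing R]
    {dX dY dZ dXY dXZ dYZ dXYZ : R}
    (h : dXYZ = dX * dY * dZ + dX * (dYZ - dY * dZ) + dY * (dXZ - dX * dZ)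
        + dZ * (dXY - dX * dY)) :
    dXYZ = dX * dYZ + dY * dXZ + dZ * dXY - 2 * (dX * dY * dZ) := by
  rw [h]; ring

theorem maximally_bilocal_four_partite_general
    (DA DB DC DD DAB DAC DAD DBC DBD DCD DABC DABD DABCD : ℝ)
    (hABC : DABC = DA * DB * DC + DA * (DBC - DB * DC) + DB * (DAC - DA * DC)
        + DC * (DAB - DA * DB))
    (hABD : DABD = DA * DB * DD + DA * (DBD - DB * DD) + DB * (DAD - DA * DD)
        + DD * (DAB - DA * DB))
    (hAB_CD : DABCD = DAB * DC * DD + DAB * (DCD - DC * DD)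
        + DC * (DABD - DAB * DD) + DD * (DABC - DAB * DC)) :
    DABCD = DAB * DCD + DA * DBD * DC + DAD * DB * DC + DA * DBC * DD
      + DAC * DB * DD - 4 * (DA * DB * DC * DD) := by
  rw [tripartite_eq_of_bilocal_tomographic hAB_CD,
    tripartite_eq_of_bilocal_tomographic hABD,
    tripartite_eq_of_bilocal_tomographic hABC]
  ring

/-- In a maximally bilocal-tomographic theory the four-partite dimension is
determined by the single- and bipartite dimensions. The maximal
bilocal-tomography identity `D_{XYZ} = D_X D_Y D_Z + D_X D̃_{YZ} + D_Y D̃_{XZ}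
+ D_Z D̃_{XY}` is assumed for the tripartitions of A, B, C, D and for the
tripartition `(AB)CD` where the composite `AB` is treated as a single system. -/
theorem maximally_bilocal_four_partite
    (DA DB DC DD DAB DAC DAD DBC DBD DCD DABC DABD DACD DBCD DABCD : ℝ)
    (hABC : DABC = DA * DB * DC + DA * (DBC - DB * DC) + DB * (DAC - DA * DC)
        + DC * (DAB - DA * DB))
    (hABD : DABD = DA * DB * DD + DA * (DBD - DB * DD) + DB * (DAD - DA * DD)
        + DD * (DAB - DA * DB))
    (hACD : DACD = DA * DC * DD + DA * (DCD - DC * DD) + DC * (DAD - DA * DD)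
        + DD * (DAC - DA * DC))
    (hBCD : DBCD = DB * DC * DD + DB * (DCD - DC * DD) + DC * (DBD - DB * DD)
        + DD * (DBC - DB * DC))
    (hAB_CD : DABCD = DAB * DC * DD + DAB * (DCD - DC * DD)
        + DC * (DABD - DAB * DD) + DD * (DABC - DAB * DC)) :
    DABCD = DAB * DCD + DA * DBD * DC + DAD * DB * DC + DA * DBC * DD
      + DAC * DB * DD - 4 * (DA * DB * DC * DD) :=
  maximally_bilocal_four_partite_general DA DB DC DD DAB DAC DAD DBC DBD DCD DABC DABD DABCD hABC
    hABD hAB_CD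
end

section
/- The two-qubit state Φ = ¼(I⊗I + σ^x⊗σ^x) satisfies Tr[Φ·(σ^x⊗σ^x)] = 1 ≠ 0; hence Φ is not diagonal in the computational basis and therefore not separable as a Fermionic state, even though Φ = ½|Π₊⟩⟨Π₊| + ½|Π₋⟩⟨Π₋| with |Π_±⟩ = |±⟩⊗|±⟩, so Φ is separable as a two-qubit quantum state. -/
/-!
Because `σx * σx = 1`, `Φ (σx ⊗ σx) = ¼ (σx ⊗ σx + 1)`, whose trace is `¼ ((tr σx)² + 4) = 1`;
the same term `σx ⊗ σx` puts `¼` at the off-diagonal entry `(00, 11)` of `Φ`. For the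
decomposition, `|±⟩⟨±| = ½ (1 ± σx)`, and expanding `(1 + σx) ⊗ (1 + σx) + (1 - σx) ⊗ (1 - σx)`
cancels the cross terms, leaving `2 (1 ⊗ 1 + σx ⊗ σx) = 8 Φ`.
-/

open Matrix Kronecker

noncomputable section

def σx : Matrix (Fin 2) (Fin 2) ℂ := !![0, 1; 1, 0]

/-- `Φ = ¼(I⊗I + σ^x⊗σ^x)`. -/
def Φ : Matrix (Fin 2 × Fin 2) (Fin 2 × Fin 2) ℂ :=
  (1 / 4 : ℂ) • ((1 : Matrix (Fin 2 × Fin 2) (Fin 2 × Fin 2) ℂ) + σx ⊗ₖ σx)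

/-- `|+⟩ = (|0⟩+|1⟩)/√2`. -/
def plus : Fin 2 → ℂ := fun _ => (1 / Real.sqrt 2 : ℝ)
/-- `|−⟩ = (|0⟩−|1⟩)/√2`. -/
def minus : Fin 2 → ℂ := fun i => if i = 0 then ((1 / Real.sqrt 2 : ℝ) : ℂ)
  else -((1 / Real.sqrt 2 : ℝ) : ℂ)

/-- `|Π₊⟩ = |+⟩⊗|+⟩`. -/
def piPlus : Fin 2 × Fin 2 → ℂ := fun i => plus i.1 * plus i.2
/-- `|Π₋⟩ = |−⟩⊗|−⟩`. -/
def piMinus : Fin 2 × Fin 2 → ℂ := fun i => minus i.1 * minus i.2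

theorem σx_mul_self : σx * σx = 1 := by
  ext i j
  fin_cases i <;> fin_cases j <;> simp [σx]

theorem trace_σx : σx.trace = 0 := by
  simp [σx, trace, Fin.sum_univ_two]

theorem vecMulVec_star_kronecker {m n α : Type*} [CommMonoid α] [StarMul α]
    (u : m → α) (v : n → α) :
    vecMulVec (fun i => u i.1 * v i.2) (star fun i => u i.1 * v i.2) =
      vecMulVec u (star u) ⊗ₖ vecMulVec v (star v) := by
  ext ⟨i, k⟩ ⟨j, l⟩
  simp only [vecMulVec_apply, kroneckerMap_apply, Pi.star_apply, star_mul']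
  ac_rfl

theorem add_kronecker_add_add_sub_kronecker_sub {m n α : Type*} [CommRing α]
    (A B : Matrix m n α) :
    (A + B) ⊗ₖ (A + B) + (A - B) ⊗ₖ (A - B) = (2 : α) • (A ⊗ₖ A + B ⊗ₖ B) := by
  ext ⟨i, k⟩ ⟨j, l⟩
  simp only [Matrix.add_apply, Matrix.sub_apply, Matrix.smul_apply, kroneckerMap_apply,
    smul_eq_mul]
  ring

theorem inv_ofReal_sqrt_two_mul_self :
    ((Real.sqrt 2 : ℝ) : ℂ)⁻¹ * ((Real.sqrt 2 : ℝ) : ℂ)⁻¹ = 2⁻¹ := by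
  rw [← mul_inv, ← Complex.ofReal_mul, Real.mul_self_sqrt zero_le_two]
  norm_num

theorem vecMulVec_plus : vecMulVec plus (star plus) = (1 / 2 : ℂ) • (1 + σx) := by
  ext i j
  fin_cases i <;> fin_cases j <;>
    simp [plus, σx, vecMulVec_apply, Complex.conj_ofReal, inv_ofReal_sqrt_two_mul_self]

theorem vecMulVec_minus : vecMulVec minus (star minus) = (1 / 2 : ℂ) • (1 - σx) := by
  ext i j
  fin_cases i <;> fin_cases j <;>
    simp [minus, σx, vecMulVec_apply, Complex.conj_ofReal, inv_ofReal_sqrt_two_mul_self]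

/-- `Tr[Φ(σ^x⊗σ^x)] = 1 ≠ 0`, hence `Φ` is not diagonal in the computational
basis and so not separable as a Fermionic state, even though
`Φ = ½(|Π₊⟩⟨Π₊| + |Π₋⟩⟨Π₋|)` is separable as a two-qubit quantum state. -/
theorem phi_not_fermionic_separable :
    (Φ * (σx ⊗ₖ σx)).trace = 1 ∧ (1 : ℂ) ≠ 0 ∧
    ¬(∀ i j : Fin 2 × Fin 2, i ≠ j → Φ i j = 0) ∧
    Φ = (1 / 2 : ℂ) •
      (Matrix.vecMulVec piPlus (star piPlus) + Matrix.vecMulVec piMinus (star piMinus)) := by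
  refine ⟨?_, one_ne_zero, fun hdiag => ?_, ?_⟩
  · calc (Φ * (σx ⊗ₖ σx)).trace
        = (1 / 4 : ℂ) * ((σx ⊗ₖ σx).trace + (1 : Matrix (Fin 2 × Fin 2) _ ℂ).trace) := by
          rw [Φ, smul_mul, add_mul, one_mul, ← mul_kronecker_mul, σx_mul_self, one_kronecker_one,
            trace_smul, trace_add, add_comm, smul_eq_mul]
      _ = 1 := by
          rw [trace_kronecker, trace_σx, trace_one]
          norm_num
  · have hΦ₀₀₁₁ := hdiag (0, 0) (1, 1) (by decide)
    norm_num [Φ, σx] at hΦ₀₀₁₁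
  · unfold piPlus piMinus
    rw [vecMulVec_star_kronecker, vecMulVec_star_kronecker, vecMulVec_plus,
      vecMulVec_minus, smul_kronecker, kronecker_smul, smul_kronecker, kronecker_smul,
      smul_smul, smul_smul, ← smul_add, add_kronecker_add_add_sub_kronecker_sub,
      one_kronecker_one, Φ, smul_smul, smul_smul]
    norm_num

end
end
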